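/- Let $l = 5$ and let $\theta = 5e_{\chi_0} + e_{\chi} + e_{\psi} \in \mathbb{Z}_5[S_3]$, where $e_{\chi_0}, e_{\chi}, e_{\psi}$ are the central idempotents of $\mathbb{Q}_5[S_3]$. Then for every $g \in S_3$ one has $(1-g)\cdot\theta = 1-g$, and $(e_{\chi_0} + 5e_{\chi} + 5e_{\psi})\cdot\theta = 5$; consequently the cokernel of multiplication by $\theta$ on $\mathbb{Z}_5[S_3]$ is isomorphic to $\mathbb{Z}/5\mathbb{Z}$ with trivial $S_3$-action. -/

import Mathlib

/- STATEMENT 3: In ℤ₅[S₃] (S₃ = DihedralGroup 3, r := sr 0, s := r 1), with the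
central idempotents e_{χ₀}, e_χ, e_ψ (6 is invertible in ℤ₅), the element
θ = 5e_{χ₀} + e_χ + e_ψ satisfies (1-g)θ = 1-g for all g ∈ S₃ and
(e_{χ₀} + 5e_χ + 5e_ψ)θ = 5; consequently the cokernel of multiplication by θ
on ℤ₅[S₃] is isomorphic to ℤ/5ℤ with trivial S₃-action. -/

instance : Fact (Nat.Prime 5) := ⟨by norm_num⟩

noncomputable section

abbrev A5 : Type := MonoidAlgebra ℤ_[5] (DihedralGroup 3)

noncomputable def ofG5 : DihedralGroup 3 →* A5 := MonoidAlgebra.of ℤ_[5] (DihedralGroup 3)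

noncomputable def s5 : A5 := ofG5 (DihedralGroup.r 1)
noncomputable def r5 : A5 := ofG5 (DihedralGroup.sr 0)

noncomputable def eChi0 : A5 :=
  Ring.inverse (6 : ℤ_[5]) • (1 + s5 + s5 ^ 2 + r5 + r5 * s5 + r5 * s5 ^ 2)
noncomputable def eChi : A5 :=
  Ring.inverse (6 : ℤ_[5]) • (1 + s5 + s5 ^ 2 - r5 - r5 * s5 - r5 * s5 ^ 2)
noncomputable def ePsi : A5 := Ring.inverse (3 : ℤ_[5]) • (2 - s5 - s5 ^ 2)

noncomputable def theta5 : A5 := 5 * eChi0 + eChi + ePsi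

/-! `e_{χ₀} = (∑ g, g) / 6` is the averaging idempotent, so `x e_{χ₀} = ε(x) e_{χ₀}` for the
augmentation `ε`. As the three idempotents sum to `1`, `θ = 1 + 4 e_{χ₀}`, hence
`x θ = x + 4 ε(x) e_{χ₀}`: this gives both identities, and shows that the image of `θ` is
`{y | 5 ∣ ε(y)}`, the kernel of the surjective, `S₃`-invariant map `ε mod 5 : ℤ₅[S₃] → ℤ/5`. -/

namespace GroupAlgebra

open MonoidAlgebra

variable {k G : Type*} [CommRing k] [Group G]

def augmentation : k[G] →ₐ[k] k := MonoidAlgebra.lift k k G 1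

lemma augmentation_of (g : G) : augmentation (of k G g) = 1 :=
  MonoidAlgebra.lift_of _ _

variable [Fintype G] [Invertible (Fintype.card G : k)]

lemma mul_average (x : k[G]) : x * average k G = augmentation x • average k G := by
  induction x using MonoidAlgebra.induction_on with
  | of g => rw [augmentation_of, one_smul]; exact mul_average_left k G g
  | add x y hx hy => rw [add_mul, hx, hy, map_add, add_smul]
  | smul r x hx => rw [smul_mul_assoc, hx, map_smul, smul_smul, smul_eq_mul]

lemma augmentation_average : augmentation (average k G) = 1 := by
  rw [average, map_smul, map_sum]
  simp only [augmentation_of, Finset.sum_const, Finset.card_univ, nsmul_eq_mul, mul_one,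
    smul_eq_mul, invOf_mul_self]

lemma mul_one_add_smul_average (c : k) (x : k[G]) :
    x * (1 + c • average k G) = x + (c * augmentation x) • average k G := by
  rw [mul_add, mul_one, mul_smul_comm, mul_average, smul_smul, mul_comm]

lemma mem_range_mulRight_one_add_smul_average (c : k) (y : k[G]) :
    y ∈ (AddMonoidHom.mulRight (1 + c • average k G)).range ↔ (1 + c) ∣ augmentation y := by
  simp only [AddMonoidHom.mem_range, AddMonoidHom.mulRight_apply, mul_one_add_smul_average]
  constructor
  · rintro ⟨x, rfl⟩
    exact ⟨augmentation x, by
      rw [map_add, map_smul, augmentation_average, smul_eq_mul, mul_one]; ring⟩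
  · rintro ⟨d, hd⟩
    refine ⟨y - (c * d) • average k G, ?_⟩
    rw [map_sub, map_smul, augmentation_average, smul_eq_mul, mul_one, hd,
      show c * ((1 + c) * d - c * d) = c * d by ring, sub_add_cancel]

end GroupAlgebra

lemma PadicInt.isUnit_natCast_of_coprime {p : ℕ} [Fact p.Prime] {n : ℕ} (h : p.Coprime n) :
    IsUnit (n : ℤ_[p]) :=
  PadicInt.isUnit_iff.mpr (PadicInt.norm_natCast_eq_one_iff.mpr h)

lemma PadicInt.toZMod_eq_zero_iff_dvd {p : ℕ} [Fact p.Prime] (x : ℤ_[p]) :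
    PadicInt.toZMod x = 0 ↔ (p : ℤ_[p]) ∣ x := by
  rw [← RingHom.mem_ker, PadicInt.ker_toZMod, PadicInt.maximalIdeal_eq_span_p,
    Ideal.mem_span_singleton]

open GroupAlgebra

instance : Invertible (Fintype.card (DihedralGroup 3) : ℤ_[5]) :=
  (PadicInt.isUnit_natCast_of_coprime (by rw [DihedralGroup.card]; norm_num)).invertible

lemma sum_ofG5 : ∑ g, ofG5 g = 1 + s5 + s5 ^ 2 + r5 + r5 * s5 + r5 * s5 ^ 2 := by
  rw [← DihedralGroup.equivSum.symm.sum_comp, Fintype.sum_sum_type,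
    show (Finset.univ : Finset (ZMod 3)) = {0, 1, 2} from rfl]
  simp only [Finset.sum_insert (show (0 : ZMod 3) ∉ {1, 2} by decide),
    Finset.sum_pair (show (1 : ZMod 3) ≠ 2 by decide)]
  simp only [DihedralGroup.equivSum_symm_apply, s5, r5, ← map_pow, ← map_mul,
    DihedralGroup.r_one_pow, DihedralGroup.sr_mul_r, Nat.cast_ofNat, zero_add]
  rw [DihedralGroup.r_zero, map_one]
  abel

lemma eChi0_eq_average : eChi0 = average ℤ_[5] (DihedralGroup 3) := by
  rw [average, ← Ring.inverse_invertible, DihedralGroup.card, eChi0, ← sum_ofG5]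
  norm_num [ofG5]

lemma eChi0_add_eChi_add_ePsi : eChi0 + eChi + ePsi = 1 := by
  have h6 : 6 * Ring.inverse (6 : ℤ_[5]) = 1 :=
    Ring.mul_inverse_cancel _ (PadicInt.isUnit_natCast_of_coprime (n := 6) (by norm_num))
  have h3 : 3 * Ring.inverse (3 : ℤ_[5]) = 1 :=
    Ring.mul_inverse_cancel _ (PadicInt.isUnit_natCast_of_coprime (n := 3) (by norm_num))
  rw [eChi0, eChi, ePsi,
    show (2 : A5) = (2 : ℤ_[5]) • 1 by rw [Algebra.smul_def, mul_one, map_ofNat]]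
  -- the coefficient of `1 + s + s²` is `2 • 6⁻¹ - 3⁻¹`, which vanishes
  linear_combination (norm := module) h3 • (1 : A5) +
    (Ring.inverse (3 : ℤ_[5]) * h6 - 2 * Ring.inverse (6 : ℤ_[5]) * h3) • (1 + s5 + s5 ^ 2)

lemma theta5_eq : theta5 = 1 + (4 : ℤ_[5]) • average ℤ_[5] (DihedralGroup 3) := by
  rw [← eChi0_eq_average, ← eChi0_add_eChi_add_ePsi, ofNat_smul_eq_nsmul, nsmul_eq_mul,
    Nat.cast_ofNat, theta5]
  noncomm_ring

def augmentationModFive : A5 →+* ZMod 5 :=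
  PadicInt.toZMod.comp (augmentation : A5 →ₐ[ℤ_[5]] ℤ_[5]).toRingHom

lemma augmentationModFive_surjective : Function.Surjective augmentationModFive := by
  intro z
  refine ⟨(z.val : A5), ?_⟩
  simp [augmentationModFive]

lemma range_mulRight_theta5 :
    (AddMonoidHom.mulRight theta5).range = (augmentationModFive : A5 →+ ZMod 5).ker := by
  ext y
  rw [theta5_eq, mem_range_mulRight_one_add_smul_average, AddMonoidHom.mem_ker]
  norm_num [augmentationModFive, PadicInt.toZMod_eq_zero_iff_dvd]

def cokernelTheta5Equiv : (A5 ⧸ (AddMonoidHom.mulRight theta5).range) ≃+ ZMod 5 :=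
  (QuotientAddGroup.quotientAddEquivOfEq range_mulRight_theta5).trans
    (QuotientAddGroup.quotientKerEquivOfSurjective _ augmentationModFive_surjective)

lemma cokernelTheta5Equiv_mk (x : A5) :
    cokernelTheta5Equiv (QuotientAddGroup.mk x) = augmentationModFive x :=
  rfl

theorem stmt3 :
    (∀ g : DihedralGroup 3, (1 - ofG5 g) * theta5 = 1 - ofG5 g) ∧
    (eChi0 + 5 * eChi + 5 * ePsi) * theta5 = 5 ∧
    -- the cokernel of multiplication by θ is ℤ/5ℤ with trivial S₃-action
    ∃ e : (A5 ⧸ (AddMonoidHom.mulRight theta5).range) ≃+ ZMod 5,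
      ∀ (g : DihedralGroup 3) (x : A5),
        e (QuotientAddGroup.mk (ofG5 g * x)) = e (QuotientAddGroup.mk x) := by
  refine ⟨fun g => ?_, ?_, cokernelTheta5Equiv, fun g x => ?_⟩
  · rw [theta5_eq, mul_one_add_smul_average, map_sub, map_one, ofG5, augmentation_of, sub_self,
      mul_zero, zero_smul, add_zero]
  · have h : eChi0 + 5 * eChi + 5 * ePsi = 5 - (4 : ℤ_[5]) • average ℤ_[5] (DihedralGroup 3) := by
      calc _ = 5 * (eChi0 + eChi + ePsi) - 4 * eChi0 := by noncomm_ring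
        _ = _ := by
          rw [eChi0_add_eChi_add_ePsi, mul_one, eChi0_eq_average, ofNat_smul_eq_nsmul,
            nsmul_eq_mul, Nat.cast_ofNat]
    rw [h, theta5_eq, mul_one_add_smul_average, map_sub, map_ofNat, map_smul, augmentation_average]
    norm_num
  · simp only [cokernelTheta5Equiv_mk, augmentationModFive, RingHom.comp_apply,
      AlgHom.toRingHom_eq_coe, RingHom.coe_coe, map_mul, ofG5, augmentation_of, map_one, one_mul]

end
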